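/- arXiv:2409.05066 — 2 statements merged into one kernel-verified Lean document; each statement's English description precedes it below -/
import Mathlib

section
/- Let λ > 0, A an invertible d×d matrix, and X an n×d matrix with all required inverses existing. Then Xᵀ(X A Xᵀ + λI)⁻² X = {A + λ(XᵀX)⁻¹}⁻¹ (XᵀX)⁻¹ {A + λ(XᵀX)⁻¹}⁻¹. -/
/-!
Push-through identity: with `V = X A Xᵀ + λ` and `W = XᵀX A + λ = XᵀX (A + λ (XᵀX)⁻¹)` we have
`Xᵀ V = W Xᵀ`, hence `Xᵀ V⁻¹ = W⁻¹ Xᵀ` and `Xᵀ V⁻² X = W⁻² XᵀX`; expanding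
`W⁻¹ = (A + λ (XᵀX)⁻¹)⁻¹ (XᵀX)⁻¹` gives the claim.
-/

open Matrix

namespace Matrix

variable {m n α : Type*} [Fintype m] [Fintype n] [DecidableEq m] [DecidableEq n] [CommRing α]

theorem mul_inv_eq_inv_mul_of_mul_eq {P : Matrix m n α} {V : Matrix n n α} {W : Matrix m m α}
    (hV : IsUnit V.det) (hW : IsUnit W.det) (h : P * V = W * P) : P * V⁻¹ = W⁻¹ * P :=
  calc P * V⁻¹ = W⁻¹ * (W * P) * V⁻¹ := by
        rw [← Matrix.mul_assoc, nonsing_inv_mul _ hW, Matrix.one_mul]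
    _ = W⁻¹ * P := by
        rw [← h, Matrix.mul_assoc, Matrix.mul_assoc, mul_nonsing_inv _ hV, Matrix.mul_one]

theorem mul_mul_add_smul_one (P : Matrix m n α) (Q : Matrix n m α) (c : α) :
    P * (Q * P + c • 1) = (P * Q + c • 1) * P := by
  rw [Matrix.mul_add, Matrix.add_mul, Matrix.mul_assoc, Matrix.mul_smul, Matrix.smul_mul,
    Matrix.mul_one, Matrix.one_mul]

theorem mul_add_smul_nonsing_inv (M A : Matrix n n α) (c : α) (hM : IsUnit M.det) :
    M * (A + c • M⁻¹) = M * A + c • 1 := by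
  rw [Matrix.mul_add, Matrix.mul_smul, mul_nonsing_inv _ hM]

end Matrix

theorem Xt_inv_sq_X_general {n d : ℕ} (lam : ℝ)
    (A : Matrix (Fin d) (Fin d) ℝ) (X : Matrix (Fin n) (Fin d) ℝ)
    (hXX : IsUnit (Xᵀ * X).det)
    (hV : IsUnit (X * A * Xᵀ + lam • (1 : Matrix (Fin n) (Fin n) ℝ)).det)
    (hAX : IsUnit (A + lam • (Xᵀ * X)⁻¹).det) :
    Xᵀ * ((X * A * Xᵀ + lam • (1 : Matrix (Fin n) (Fin n) ℝ))⁻¹ *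
        (X * A * Xᵀ + lam • (1 : Matrix (Fin n) (Fin n) ℝ))⁻¹) * X =
      (A + lam • (Xᵀ * X)⁻¹)⁻¹ * (Xᵀ * X)⁻¹ * (A + lam • (Xᵀ * X)⁻¹)⁻¹ := by
  set V := X * A * Xᵀ + lam • (1 : Matrix (Fin n) (Fin n) ℝ)
  set M := Xᵀ * X
  set C := A + lam • M⁻¹
  have hW : IsUnit (M * C).det := by rw [det_mul]; exact hXX.mul hAX
  have hpush : Xᵀ * V⁻¹ = (M * C)⁻¹ * Xᵀ := by
    refine mul_inv_eq_inv_mul_of_mul_eq hV hW ?_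
    rw [mul_add_smul_nonsing_inv _ _ _ hXX]
    simp only [V, M, Matrix.mul_assoc Xᵀ X A]
    exact mul_mul_add_smul_one Xᵀ (X * A) lam
  calc Xᵀ * (V⁻¹ * V⁻¹) * X = (M * C)⁻¹ * (M * C)⁻¹ * M := by
        rw [← Matrix.mul_assoc, hpush, Matrix.mul_assoc _ Xᵀ, hpush]
        simp only [M, Matrix.mul_assoc]
    _ = C⁻¹ * M⁻¹ * C⁻¹ := by
        rw [Matrix.mul_inv_rev]
        simp only [Matrix.mul_assoc, nonsing_inv_mul _ hXX, Matrix.mul_one]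

theorem Xt_inv_sq_X {n d : ℕ} (lam : ℝ) (hlam : 0 < lam)
    (A : Matrix (Fin d) (Fin d) ℝ) (X : Matrix (Fin n) (Fin d) ℝ)
    (hA : IsUnit A.det) (hXX : IsUnit (Xᵀ * X).det)
    (hV : IsUnit (X * A * Xᵀ + lam • (1 : Matrix (Fin n) (Fin n) ℝ)).det)
    (hAX : IsUnit (A + lam • (Xᵀ * X)⁻¹).det) :
    Xᵀ * ((X * A * Xᵀ + lam • (1 : Matrix (Fin n) (Fin n) ℝ))⁻¹ *
        (X * A * Xᵀ + lam • (1 : Matrix (Fin n) (Fin n) ℝ))⁻¹) * X =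
      (A + lam • (Xᵀ * X)⁻¹)⁻¹ * (Xᵀ * X)⁻¹ * (A + lam • (Xᵀ * X)⁻¹)⁻¹ :=
  Xt_inv_sq_X_general lam A X hXX hV hAX
end

section
/- Let M and M' be d×d symmetric positive definite matrices and X₁₁, X₂₁ be n×d matrices with invertible Gram matrices. Then the top-left block of the inverse of the 2×2 block matrix [[X₁₁(M+M')X₁₁ᵀ + λI, X₁₁M'X₂₁ᵀ], [X₂₁M'X₁₁ᵀ, X₂₁(M+M')X₂₁ᵀ + λI]], when multiplied left by X₁₁ᵀ and right by X₁₁, equals [M + M' − M'{M + M' + λ(X₂₁ᵀX₂₁)⁻¹}⁻¹M' + λ(X₁₁ᵀX₁₁)⁻¹]⁻¹. -/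
/-!
Write `Q = [[A, B], [C, D]]` for the block matrix. Its top-left inverse block is the inverse of
the Schur complement `A - B D⁻¹ C`, so everything reduces to the push-through identity
`Xᵀ (X S Xᵀ + λ I)⁻¹ X = (S + λ (XᵀX)⁻¹)⁻¹`, which follows from
`X (S + λ (XᵀX)⁻¹) = (X S Xᵀ + λ I) X (XᵀX)⁻¹`. Applied to `X₂₁` it computes
`B D⁻¹ C = X₁₁ M' {M + M' + λ(X₂₁ᵀX₂₁)⁻¹}⁻¹ M' X₁₁ᵀ`, which puts `A - B D⁻¹ C` in the form
`X₁₁ N X₁₁ᵀ + λ I`; applied once more to `X₁₁` it gives the claim. The invertibility of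
`X S Xᵀ + λ I` is equivalent to that of `S + λ (XᵀX)⁻¹` by the Weinstein–Aronszajn identity
`det (1 + U V) = det (1 + V U)`.
-/

open Matrix

namespace Matrix

theorem mul_add_smul_one_eq_smul {m n K : Type*} [Fintype n] [DecidableEq m] [Field K] {c : K}
    (hc : c ≠ 0) (X : Matrix m n K) (Y : Matrix n m K) :
    X * Y + c • 1 = c • (1 + X * (c⁻¹ • Y)) := by
  rw [smul_add, Matrix.mul_smul, smul_smul, mul_inv_cancel₀ hc, one_smul, add_comm]

variable {m n K : Type*} [Fintype m] [Fintype n] [DecidableEq m] [DecidableEq n] [Field K]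

theorem isUnit_det_mul_add_smul_one_comm {c : K} (hc : c ≠ 0) (X : Matrix m n K)
    (Y : Matrix n m K) : IsUnit (X * Y + c • 1).det ↔ IsUnit (Y * X + c • 1).det := by
  rw [mul_add_smul_one_eq_smul hc, mul_add_smul_one_eq_smul hc, det_smul, det_smul,
    IsUnit.mul_iff, IsUnit.mul_iff, det_one_add_mul_comm, Matrix.smul_mul, Matrix.mul_smul]
  simp [hc]

theorem isUnit_det_mul_mul_transpose_add_smul_one_iff {c : K} (hc : c ≠ 0) (X : Matrix m n K)
    (S : Matrix n n K) (hG : IsUnit (Xᵀ * X).det) :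
    IsUnit (X * S * Xᵀ + c • 1).det ↔ IsUnit (S + c • (Xᵀ * X)⁻¹).det := by
  have factor : S * Xᵀ * X + c • 1 = (S + c • (Xᵀ * X)⁻¹) * (Xᵀ * X) := by
    rw [Matrix.add_mul, Matrix.smul_mul, nonsing_inv_mul _ hG, Matrix.mul_assoc]
  rw [Matrix.mul_assoc, isUnit_det_mul_add_smul_one_comm hc, factor, det_mul, IsUnit.mul_iff]
  exact and_iff_left hG

theorem transpose_mul_inv_mul_transpose_add_smul_one_mul {c : K} (hc : c ≠ 0)
    (X : Matrix m n K) (S : Matrix n n K) (hG : IsUnit (Xᵀ * X).det)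
    (hS : IsUnit (S + c • (Xᵀ * X)⁻¹).det) :
    Xᵀ * (X * S * Xᵀ + c • 1)⁻¹ * X = (S + c • (Xᵀ * X)⁻¹)⁻¹ := by
  have hP := (isUnit_det_mul_mul_transpose_add_smul_one_iff hc X S hG).mpr hS
  have push : X * (S + c • (Xᵀ * X)⁻¹) = (X * S * Xᵀ + c • 1) * (X * (Xᵀ * X)⁻¹) := by
    rw [Matrix.add_mul, Matrix.mul_assoc (X * S), ← Matrix.mul_assoc Xᵀ,
      mul_nonsing_inv _ hG, Matrix.mul_one, Matrix.smul_mul, Matrix.one_mul, Matrix.mul_add,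
      Matrix.mul_smul]
  refine (inv_eq_left_inv ?_).symm
  rw [Matrix.mul_assoc _ X, push, ← Matrix.mul_assoc, Matrix.mul_assoc Xᵀ,
    nonsing_inv_mul _ hP, Matrix.mul_one, ← Matrix.mul_assoc, mul_nonsing_inv _ hG]

theorem toBlocks₁₁_inv_fromBlocks {p : Type*} [Fintype p] [DecidableEq p]
    (A : Matrix m m K) (B : Matrix m p K) (C : Matrix p m K) (D : Matrix p p K)
    (hD : IsUnit D.det) (hS : IsUnit (A - B * D⁻¹ * C).det) :
    (fromBlocks A B C D)⁻¹.toBlocks₁₁ = (A - B * D⁻¹ * C)⁻¹ := by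
  let := D.invertibleOfIsUnitDet hD
  let : Invertible (A - B * ⅟D * C) := by
    rw [invOf_eq_nonsing_inv]
    exact invertibleOfIsUnitDet _ hS
  let := fromBlocks₂₂Invertible A B C D
  rw [← invOf_eq_nonsing_inv, invOf_fromBlocks₂₂_eq, toBlocks_fromBlocks₁₁,
    invOf_eq_nonsing_inv, invOf_eq_nonsing_inv]

end Matrix

theorem block_inv_topLeft_sandwich_general {n d : ℕ} (lam : ℝ) (hlam : 0 < lam)
    (M M' : Matrix (Fin d) (Fin d) ℝ)
    (X11 X21 : Matrix (Fin n) (Fin d) ℝ)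
    (h11 : IsUnit (X11ᵀ * X11).det) (h21 : IsUnit (X21ᵀ * X21).det)
    (hSchur : IsUnit (M + M' + lam • (X21ᵀ * X21)⁻¹).det)
    (hBr : IsUnit (M + M' - M' * (M + M' + lam • (X21ᵀ * X21)⁻¹)⁻¹ * M'
        + lam • (X11ᵀ * X11)⁻¹).det) :
    X11ᵀ * (Matrix.fromBlocks
        (X11 * (M + M') * X11ᵀ + lam • (1 : Matrix (Fin n) (Fin n) ℝ))
        (X11 * M' * X21ᵀ)
        (X21 * M' * X11ᵀ)
        (X21 * (M + M') * X21ᵀ + lam • (1 : Matrix (Fin n) (Fin n) ℝ)))⁻¹.toBlocks₁₁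
      * X11 =
      (M + M' - M' * (M + M' + lam • (X21ᵀ * X21)⁻¹)⁻¹ * M'
        + lam • (X11ᵀ * X11)⁻¹)⁻¹ := by
  set D := X21 * (M + M') * X21ᵀ + lam • (1 : Matrix (Fin n) (Fin n) ℝ)
  set N := M + M' - M' * (M + M' + lam • (X21ᵀ * X21)⁻¹)⁻¹ * M'
  have hD : IsUnit D.det :=
    (isUnit_det_mul_mul_transpose_add_smul_one_iff hlam.ne' X21 _ h21).mpr hSchur
  have inner : X21ᵀ * D⁻¹ * X21 = (M + M' + lam • (X21ᵀ * X21)⁻¹)⁻¹ :=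
    transpose_mul_inv_mul_transpose_add_smul_one_mul hlam.ne' X21 _ h21 hSchur
  have schur : X11 * (M + M') * X11ᵀ + lam • 1 - X11 * M' * X21ᵀ * D⁻¹ * (X21 * M' * X11ᵀ) =
      X11 * N * X11ᵀ + lam • 1 := by
    simp only [N, ← inner, Matrix.mul_sub, Matrix.sub_mul, Matrix.mul_assoc]
    abel
  have hN : IsUnit (X11 * N * X11ᵀ + lam • 1).det :=
    (isUnit_det_mul_mul_transpose_add_smul_one_iff hlam.ne' X11 N h11).mpr hBr
  rw [toBlocks₁₁_inv_fromBlocks _ _ _ _ hD (schur ▸ hN), schur]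
  exact transpose_mul_inv_mul_transpose_add_smul_one_mul hlam.ne' X11 N h11 hBr

theorem block_inv_topLeft_sandwich {n d : ℕ} (lam : ℝ) (hlam : 0 < lam)
    (M M' : Matrix (Fin d) (Fin d) ℝ) (hM : M.PosDef) (hM' : M'.PosDef)
    (X11 X21 : Matrix (Fin n) (Fin d) ℝ)
    (h11 : IsUnit (X11ᵀ * X11).det) (h21 : IsUnit (X21ᵀ * X21).det)
    (hQ : IsUnit (Matrix.fromBlocks
        (X11 * (M + M') * X11ᵀ + lam • (1 : Matrix (Fin n) (Fin n) ℝ))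
        (X11 * M' * X21ᵀ)
        (X21 * M' * X11ᵀ)
        (X21 * (M + M') * X21ᵀ + lam • (1 : Matrix (Fin n) (Fin n) ℝ))).det)
    (hSchur : IsUnit (M + M' + lam • (X21ᵀ * X21)⁻¹).det)
    (hBr : IsUnit (M + M' - M' * (M + M' + lam • (X21ᵀ * X21)⁻¹)⁻¹ * M'
        + lam • (X11ᵀ * X11)⁻¹).det) :
    X11ᵀ * (Matrix.fromBlocks
        (X11 * (M + M') * X11ᵀ + lam • (1 : Matrix (Fin n) (Fin n) ℝ))
        (X11 * M' * X21ᵀ)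
        (X21 * M' * X11ᵀ)
        (X21 * (M + M') * X21ᵀ + lam • (1 : Matrix (Fin n) (Fin n) ℝ)))⁻¹.toBlocks₁₁
      * X11 =
      (M + M' - M' * (M + M' + lam • (X21ᵀ * X21)⁻¹)⁻¹ * M'
        + lam • (X11ᵀ * X11)⁻¹)⁻¹ :=
  block_inv_topLeft_sandwich_general lam hlam M M' X11 X21 h11 h21 hSchur hBr
end
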